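/- With φ_U as above and Φ(X) = Π_{∅≠U⊆[ℓ]} φ_U(X): if X = (x_1,...,x_ℓ) is nonzero and each x_i is either 0 or has Hamming weight ≥ d, then Φ(X) ≤ 0. Moreover Φ(0) > 0. -/
import Mathlib


open Finset

/-- Hamming weight of a vector in `{0,1}^n`. -/
def wt {n : ℕ} (x : Fin n → ZMod 2) : ℕ := (Finset.univ.filter fun i => x i ≠ 0).card

/-- `φ_U(x_1,…,x_ℓ) = ∑_{i∈U} [(n+d-2|x_i|)^m - (n-d)^m]`. -/
noncomputable def phiU (n d m : ℕ) {ℓ : ℕ} (U : Finset (Fin ℓ))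
    (x : Fin ℓ → Fin n → ZMod 2) : ℝ :=
  ∑ i ∈ U, (((n:ℝ) + d - 2 * wt (x i))^m - ((n:ℝ) - d)^m)

/-- `Φ = ∏_{∅ ≠ U ⊆ [ℓ]} φ_U`. -/
noncomputable def Phi (n d m : ℕ) {ℓ : ℕ} (x : Fin ℓ → Fin n → ZMod 2) : ℝ :=
  ∏ U ∈ Finset.univ.powerset.filter (fun U : Finset (Fin ℓ) => U.Nonempty), phiU n d m U x

lemma wt_le {n : ℕ} (x : Fin n → ZMod 2) : wt x ≤ n := by
  simpa [wt] using (Finset.card_filter_le Finset.univ fun i => x i ≠ 0)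

lemma wt_zero {n : ℕ} : wt (0 : Fin n → ZMod 2) = 0 := by simp [wt]

lemma prod_nonpos_of_odd {α : Type*} {s : Finset α} {f : α → ℝ}
    (h : ∀ a ∈ s, f a ≤ 0) (ho : Odd s.card) : ∏ a ∈ s, f a ≤ 0 := by
  have h1 : (0:ℝ) ≤ ∏ a ∈ s, (-(f a)) :=
    Finset.prod_nonneg fun a ha => neg_nonneg.2 (h a ha)
  have h2 : ∏ a ∈ s, (-(f a)) = (-1)^s.card * ∏ a ∈ s, f a := by
    rw [Finset.prod_congr rfl (fun a _ => neg_eq_neg_one_mul (f a)),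
      Finset.prod_mul_distrib, Finset.prod_const]
  rw [ho.neg_one_pow] at h2
  linarith

/-- `Φ` is nonpositive on nonzero valid configurations, and positive at zero. -/
theorem Phi_sign (n d ℓ m : ℕ) (hm : Even m) (hm0 : 0 < m)
    (hd : 0 < d) (hdn : d < n)
    (hℓm : (ℓ : ℝ) ≤ ((1 + (d:ℝ)/n) / (1 - (d:ℝ)/n))^m)
    (x : Fin ℓ → Fin n → ZMod 2) :
    (x ≠ 0 → (∀ i, x i = 0 ∨ d ≤ wt (x i)) → Phi n d m x ≤ 0) ∧
    0 < Phi n d m (0 : Fin ℓ → Fin n → ZMod 2) := by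
  have hn0 : (0:ℝ) < n := by exact_mod_cast hd.trans hdn
  have hd0 : (0:ℝ) < d := by exact_mod_cast hd
  have hdnR : (d:ℝ) < n := by exact_mod_cast hdn
  have hce : (0:ℝ) < (n:ℝ) - d := by linarith
  have hcepos : (0:ℝ) < (n:ℝ) + d := by linarith
  have hconst : ((n:ℝ) - d)^m < ((n:ℝ) + d)^m :=
    pow_lt_pow_left₀ (by linarith) (le_of_lt hce) hm0.ne'
  -- key: ℓ * (n-d)^m ≤ (n+d)^m
  have hkey : (ℓ:ℝ) * ((n:ℝ) - d)^m ≤ ((n:ℝ) + d)^m := by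
    have hratio : (1 + (d:ℝ)/n) / (1 - (d:ℝ)/n) = ((n:ℝ) + d) / ((n:ℝ) - d) := by
      field_simp
    rw [hratio, div_pow] at hℓm
    calc (ℓ:ℝ) * ((n:ℝ) - d)^m ≤ (((n:ℝ)+d)^m / ((n:ℝ)-d)^m) * ((n:ℝ)-d)^m :=
          mul_le_mul_of_nonneg_right hℓm (le_of_lt (pow_pos hce m))
      _ = ((n:ℝ)+d)^m := div_mul_cancel₀ _ (pow_pos hce m).ne'
  constructor
  · intro hx hval
    set V : Finset (Fin ℓ) := Finset.univ.filter (fun i => d ≤ wt (x i)) with hV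
    have hVne : V.Nonempty := by
      obtain ⟨i, hi⟩ : ∃ i, x i ≠ 0 := by
        by_contra h
        push_neg at h
        exact hx (funext fun i => h i)
      rcases hval i with h0 | hw
      · exact absurd h0 hi
      · exact ⟨i, by simp [hV, hw]⟩
    set S := Finset.univ.powerset.filter (fun U : Finset (Fin ℓ) => U.Nonempty) with hS
    have hsplit : Phi n d m x =
        (∏ U ∈ S.filter (fun U => U ⊆ V), phiU n d m U x) *
        (∏ U ∈ S.filter (fun U => ¬ U ⊆ V), phiU n d m U x) := by
      rw [Phi, ← Finset.prod_filter_mul_prod_filter_not S (fun U => U ⊆ V)]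
    -- factors with U ⊆ V are nonpositive
    have hneg : ∀ U ∈ S.filter (fun U => U ⊆ V), phiU n d m U x ≤ 0 := by
      intro U hU
      simp only [hS, Finset.mem_filter, Finset.mem_powerset] at hU
      obtain ⟨⟨-, -⟩, hUV⟩ := hU
      apply Finset.sum_nonpos
      intro i hi
      have hiV := hUV hi
      simp only [hV, Finset.mem_filter] at hiV
      have hw : (d:ℝ) ≤ wt (x i) := by exact_mod_cast hiV.2
      have hwn : (wt (x i) : ℝ) ≤ n := by exact_mod_cast wt_le (x i)
      have habs : |(n:ℝ) + d - 2 * wt (x i)| ≤ (n:ℝ) - d := abs_le.2 ⟨by linarith, by linarith⟩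
      have := pow_le_pow_left₀ (abs_nonneg _) habs m
      rw [hm.pow_abs] at this
      linarith
    -- odd number of such factors
    have hcard : Odd (S.filter (fun U => U ⊆ V)).card := by
      have heq : S.filter (fun U => U ⊆ V) = V.powerset.filter (fun U => U.Nonempty) := by
        ext U
        simp only [hS, Finset.mem_filter, Finset.mem_powerset]
        constructor
        · rintro ⟨⟨-, h2⟩, h3⟩; exact ⟨h3, h2⟩
        · rintro ⟨h1, h2⟩; exact ⟨⟨Finset.subset_univ U, h2⟩, h1⟩
      rw [heq]
      have : V.powerset.filter (fun U => U.Nonempty) = V.powerset.erase ∅ := by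
        ext U
        simp [Finset.nonempty_iff_ne_empty, and_comm]
      rw [this, Finset.card_erase_of_mem (Finset.empty_mem_powerset V), Finset.card_powerset]
      obtain ⟨k, hk⟩ := Nat.exists_eq_add_of_lt (Finset.card_pos.mpr hVne)
      rw [hk]
      refine ⟨2^(k) - 1, ?_⟩
      have h1 : 1 ≤ 2^k := Nat.one_le_two_pow
      rw [show (0:ℕ) + k + 1 = k + 1 by ring, pow_succ]
      omega
    -- factors with U not ⊆ V are nonnegative
    have hpos : ∀ U ∈ S.filter (fun U => ¬ U ⊆ V), 0 ≤ phiU n d m U x := by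
      intro U hU
      simp only [hS, Finset.mem_filter, Finset.mem_powerset] at hU
      obtain ⟨⟨-, hUne⟩, hUV⟩ := hU
      obtain ⟨i, hiU, hiV⟩ : ∃ i ∈ U, i ∉ V := by
        by_contra h
        push_neg at h
        exact hUV h
      have hxi : x i = 0 := by
        rcases hval i with h0 | hw
        · exact h0
        · exact absurd (by simp [hV, hw]) hiV
      have hterm : ((n:ℝ) + d - 2 * wt (x i))^m - ((n:ℝ) - d)^m
          = ((n:ℝ) + d)^m - ((n:ℝ) - d)^m := by
        rw [hxi, wt_zero]; norm_num
      have htb : ∀ j : Fin ℓ, -(((n:ℝ) - d)^m) ≤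
          ((n:ℝ) + d - 2 * wt (x j))^m - ((n:ℝ) - d)^m := by
        intro j
        have := hm.pow_nonneg ((n:ℝ) + d - 2 * wt (x j))
        linarith
      rw [phiU, ← Finset.add_sum_erase _ _ hiU, hterm]
      have hsum : ∑ j ∈ U.erase i, -(((n:ℝ) - d)^m) ≤
          ∑ j ∈ U.erase i, (((n:ℝ) + d - 2 * wt (x j))^m - ((n:ℝ) - d)^m) :=
        Finset.sum_le_sum fun j _ => htb j
      rw [Finset.sum_const, Finset.card_erase_of_mem hiU] at hsum
      have hUcard : U.card ≤ ℓ := by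
        simpa using Finset.card_le_card (Finset.subset_univ U)
      have hU1 : 1 ≤ U.card := Finset.card_pos.mpr hUne
      have hcast : ((U.card - 1 : ℕ) : ℝ) = (U.card : ℝ) - 1 := by
        rw [Nat.cast_sub hU1]; norm_num
      have hUcR : (U.card : ℝ) ≤ ℓ := by exact_mod_cast hUcard
      have hpm : (0:ℝ) ≤ ((n:ℝ) - d)^m := le_of_lt (pow_pos hce m)
      rw [nsmul_eq_mul, hcast] at hsum
      nlinarith [hsum, hkey, mul_le_mul_of_nonneg_right hUcR hpm]
    rw [hsplit]
    exact mul_nonpos_iff.mpr (Or.inr ⟨prod_nonpos_of_odd hneg hcard,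
      Finset.prod_nonneg hpos⟩)
  · apply Finset.prod_pos
    intro U hU
    simp only [Finset.mem_filter, Finset.mem_powerset] at hU
    have hz : ∀ i ∈ U, ((n:ℝ) + d - 2 * wt ((0 : Fin ℓ → Fin n → ZMod 2) i))^m - ((n:ℝ) - d)^m
        = ((n:ℝ) + d)^m - ((n:ℝ) - d)^m := by
      intro i _
      norm_num [wt_zero]
    have heq : phiU n d m U (0 : Fin ℓ → Fin n → ZMod 2)
        = U.card * (((n:ℝ) + d)^m - ((n:ℝ) - d)^m) := by
      rw [phiU, Finset.sum_congr rfl hz, Finset.sum_const, nsmul_eq_mul]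
    rw [heq]
    have hc : (0:ℝ) < U.card := by exact_mod_cast Finset.card_pos.mpr hU.2
    exact mul_pos hc (by linarith)
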